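/- If a partial path π from v_s to v is dominated by another partial path π' from v_s to v, then no extension of π to the destination can be a cost-unique Pareto-optimal solution: for any path σ from v to v_d, there is a solution path (namely π'·σ) whose cost dominates that of π·σ. -/

import Mathlib

def Dominates {M : ℕ} (a b : Fin M → ℝ) : Prop := (∀ i, a i ≤ b i) ∧ a ≠ b

def IsPath {V : Type*} (E : V → V → Prop) : List V → Prop
  | [] => False
  | [_] => True
  | u :: v :: rest => E u v ∧ IsPath E (v :: rest)

def pathCost {V : Type*} {M : ℕ} (c : V → V → Fin M → ℝ) : List V → Fin M → ℝ
  | u :: v :: rest => c u v + pathCost c (v :: rest)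
  | _ => 0

lemma isPath_append {V : Type*} (E : V → V → Prop) (v : V) :
    ∀ (p q : List V), IsPath E p → IsPath E q → p.getLast? = some v →
      q.head? = some v → IsPath E (p ++ q.tail)
  | [], _, hp, _, _, _ => hp.elim
  | [a], q, _, hq, hl, hh => by
      simp at hl; subst hl
      cases q with
      | nil => simp at hh
      | cons b t =>
        simp at hh; subst hh
        simpa using hq
  | a :: b :: r, q, hp, hq, hl, hh => by
      refine ⟨hp.1, isPath_append E v (b :: r) q hp.2 hq ?_ hh⟩
      simpa [List.getLast?] using hl

lemma cost_append {V : Type*} {M : ℕ} (c : V → V → Fin M → ℝ) (v : V) :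
    ∀ (p q : List V), p.getLast? = some v → q.head? = some v →
      ∀ i, pathCost c (p ++ q.tail) i = pathCost c p i + pathCost c q i
  | [], _, hl, _, _ => by simp at hl
  | [a], q, hl, hh, i => by
      simp at hl; subst hl
      cases q with
      | nil => simp at hh
      | cons b t =>
        simp at hh; subst hh
        cases t with
        | nil => simp [pathCost]
        | cons d u => simp [pathCost]
  | a :: b :: r, q, hl, hh, i => by
      have := cost_append c v (b :: r) q (by simpa [List.getLast?] using hl) hh i
      simp only [List.cons_append, pathCost, Pi.add_apply, List.append_eq] at this ⊢
      rw [this]; ring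

lemma last_append {V : Type*} (v vd : V) :
    ∀ (p q : List V), p.getLast? = some v → q.head? = some v →
      q.getLast? = some vd → (p ++ q.tail).getLast? = some vd := by
  intro p q hl hh hql
  cases q with
  | nil => simp at hh
  | cons b t =>
    simp at hh
    cases t with
    | nil => simp at hql; subst hql; rw [← hh] at hl; simpa using hl
    | cons d u =>
      have h2 : (b :: d :: u).getLast? = (d :: u).getLast? := by
        simp [List.getLast?]
      rw [h2] at hql
      simp only [List.tail_cons]
      rw [List.getLast?_append_cons]
      exact hql

/-- If a partial path `π` from `v_s` to `v` is dominated by another partial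
path `π'` from `v_s` to `v`, then no extension of `π` to `v_d` is a
Pareto-optimal solution: for any path `σ` from `v` to `v_d`, there is a
solution path (namely `π'·σ`) whose cost dominates that of `π·σ`. -/
theorem dominated_partial_path_not_pareto {V : Type*} {M : ℕ}
    (E : V → V → Prop) (c : V → V → Fin M → ℝ)
    (vs v vd : V) (π π' : List V)
    (hπ : IsPath E π) (hπ' : IsPath E π')
    (hπh : π.head? = some vs) (hπl : π.getLast? = some v)
    (hπ'h : π'.head? = some vs) (hπ'l : π'.getLast? = some v)
    (hdom : Dominates (pathCost c π') (pathCost c π)) :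
    ∀ σ : List V, IsPath E σ → σ.head? = some v → σ.getLast? = some vd →
      ∃ τ : List V, IsPath E τ ∧ τ.head? = some vs ∧ τ.getLast? = some vd ∧
        Dominates (pathCost c τ) (pathCost c (π ++ σ.tail)) := by
  intro σ hσ hσh hσl
  refine ⟨π' ++ σ.tail, isPath_append E v π' σ hπ' hσ hπ'l hσh, ?_, ?_, ?_, ?_⟩
  · cases π' with
    | nil => simp at hπ'h
    | cons a t => simpa using hπ'h
  · exact last_append v vd π' σ hπ'l hσh hσl
  · intro i
    rw [cost_append c v π' σ hπ'l hσh i, cost_append c v π σ hπl hσh i]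
    exact add_le_add_left (hdom.1 i) _
  · intro heq
    apply hdom.2
    funext i
    have := congrFun heq i
    rw [cost_append c v π' σ hπ'l hσh i, cost_append c v π σ hπl hσh i] at this
    linarith
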